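/- For m = 2p even, define d^{(m)}_{k_1,...,k_{m-1}} = 2 Σ_{j=1}^{p} e^{(m),j}_{k_1,...,k_{m-1}}; for m = 2p+1 odd, define d^{(m)}_{k_1,...,k_{m-1}} = e^{(m),p+1}_{k_1,...,k_{m-1}} + 2 Σ_{j=1}^{p} e^{(m),j}_{k_1,...,k_{m-1}}, where e^{(m),j}_{k_1,...,k_{m-1}} = ∏_{1 ≤ i ≤ m, i ≠ j}(i-j)^{k_{(i-j) mod m}}. Then for all m ≥ 2 and all nonnegative integers k_1,...,k_{m-1}, d^{(m)}_{k_1,...,k_{m-1}} is a positive integer divisible by m. -/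

import Mathlib

/-- The coefficient `e^{(m),j}_{k_1,…,k_{m-1}} = ∏_{1 ≤ i ≤ m, i ≠ j}
(i-j)^{k_{(i-j) mod m}}`, where `k : ℕ → ℕ` records `k_1, …, k_{m-1}`. -/
def ecoef (m j : ℕ) (k : ℕ → ℕ) : ℤ :=
  ∏ i ∈ (Finset.Icc 1 m).erase j,
    ((i : ℤ) - (j : ℤ)) ^ k ((((i : ℤ) - (j : ℤ)) % (m : ℤ)).toNat)

/-- `d^{(m)} = 2 Σ_{j=1}^{p} e^{(m),j}` for `m = 2p` even, and
`d^{(m)} = e^{(m),p+1} + 2 Σ_{j=1}^{p} e^{(m),j}` for `m = 2p+1` odd. -/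
def dcoef (m : ℕ) (k : ℕ → ℕ) : ℤ :=
  if m % 2 = 0 then 2 * ∑ j ∈ Finset.Icc 1 (m / 2), ecoef m j k
  else ecoef m (m / 2 + 1) k + 2 * ∑ j ∈ Finset.Icc 1 (m / 2), ecoef m j k

/-!
Write `e_j` for `e^{(m),j}`. Grouping the factors of `e_j` by the residue `r = (i - j) mod m`
gives `e_j = ∏_{r=1}^{m-1} ρ_j(r)^{k_r}` with `ρ_j(r) ∈ {r, r - m}`. So `e_j ≡ ∏ r^{k_r} (mod m)`
for every `j`, and `d = Σ_{j ≤ ⌊m/2⌋} e_j + Σ_{j ≤ ⌈m/2⌉} e_j` is a sum of `m` such terms.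

Going from `e_j` to `e_{j+1}` only changes the factor of `r = m - j`, from `(m - j)^{k_{m-j}}`
to `(-j)^{k_{m-j}}`. Hence the `e_j` equal `e_1 > 0` up to the first `t` with `k_{m-t} ≠ 0`, and
`(m - t) |e_j| ≤ t e_1` for `t < j ≤ ⌈m/2⌉`. Summing, `(m - t) Σ_{j ≤ q} e_j ≥ t e_1 (m - q) > 0`
for both half sums.
-/

open Finset

lemma toNat_sub_emod {m i j : ℕ} (hi : i < m + j) (hj : j ≤ m + i) :
    (((i : ℤ) - j) % m).toNat = if j ≤ i then i - j else i + m - j := by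
  split_ifs with h
  · rw [Int.emod_eq_of_lt (by omega) (by omega)]; omega
  · rw [← Int.add_emod_right, Int.emod_eq_of_lt (by omega) (by omega)]; omega

section

variable (m : ℕ) (k : ℕ → ℕ)

lemma ecoef_eq_prod_Icc {j : ℕ} (hj : 1 ≤ j) (hjm : j ≤ m) :
    ecoef m j k = ∏ r ∈ Icc 1 (m - 1), (if j + r ≤ m then (r : ℤ) else r - m) ^ k r := by
  refine prod_nbij' (fun i => if j ≤ i then i - j else i + m - j)
    (fun r => if j + r ≤ m then j + r else j + r - m) ?_ ?_ ?_ ?_ fun i hi => ?_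
  any_goals intro i hi; simp only [mem_erase, mem_Icc] at hi ⊢; split_ifs <;> omega
  simp only [mem_erase, mem_Icc] at hi
  rw [toNat_sub_emod (by omega) (by omega)]
  split_ifs <;> first | omega | (congr 1; omega)

lemma intCast_ecoef {j : ℕ} (hj : 1 ≤ j) (hjm : j ≤ m) :
    ((ecoef m j k : ℤ) : ZMod m) = ∏ r ∈ Icc 1 (m - 1), (r : ZMod m) ^ k r := by
  rw [ecoef_eq_prod_Icc m k hj hjm]
  push_cast
  refine prod_congr rfl fun r _ => ?_
  split_ifs <;> simp

lemma intCast_sum_ecoef {q : ℕ} (hqm : q ≤ m) :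
    ((∑ j ∈ Icc 1 q, ecoef m j k : ℤ) : ZMod m) = q * ∏ r ∈ Icc 1 (m - 1), (r : ZMod m) ^ k r := by
  rw [Int.cast_sum, sum_congr rfl fun j hj => ?_, sum_const, Nat.card_Icc, nsmul_eq_mul,
    Nat.add_sub_cancel]
  rw [mem_Icc] at hj
  exact intCast_ecoef m k hj.1 (by omega)

lemma ecoef_one_pos : 0 < ecoef m 1 k :=
  prod_pos fun i hi => pow_pos (by simp only [mem_erase, mem_Icc] at hi; omega) _

lemma ecoef_succ_mul {j : ℕ} (hj : 1 ≤ j) (hjm : j < m) :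
    ecoef m (j + 1) k * ((m : ℤ) - j) ^ k (m - j) = ecoef m j k * (-(j : ℤ)) ^ k (m - j) := by
  have hr : m - j ∈ Icc 1 (m - 1) := mem_Icc.2 ⟨by omega, by omega⟩
  rw [ecoef_eq_prod_Icc m k (by omega) hjm, ecoef_eq_prod_Icc m k hj hjm.le,
    ← mul_prod_erase _ _ hr, ← mul_prod_erase (Icc 1 (m - 1)) _ hr, if_neg (by omega),
    if_pos (by omega)]
  have hrest : ∀ r ∈ (Icc 1 (m - 1)).erase (m - j),
      (if j + 1 + r ≤ m then (r : ℤ) else r - m) = if j + r ≤ m then (r : ℤ) else r - m := by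
    intro r hr
    simp only [mem_erase, mem_Icc] at hr
    split_ifs <;> first | rfl | omega
  rw [prod_congr rfl fun r hr => by rw [hrest r hr]]
  push_cast [Nat.cast_sub hjm.le]
  ring

lemma ecoef_succ_of_eq_zero {j : ℕ} (hj : 1 ≤ j) (hjm : j < m) (hk : k (m - j) = 0) :
    ecoef m (j + 1) k = ecoef m j k := by
  simpa only [hk, pow_zero, mul_one] using ecoef_succ_mul m k hj hjm

lemma abs_ecoef_succ_mul {j : ℕ} (hj : 1 ≤ j) (hjm : j < m) :
    |ecoef m (j + 1) k| * ((m : ℤ) - j) ^ k (m - j) = |ecoef m j k| * (j : ℤ) ^ k (m - j) := by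
  simpa only [abs_mul, abs_pow, abs_neg, Nat.abs_cast, abs_of_nonneg (by omega : (0 : ℤ) ≤ m - j)]
    using congrArg abs (ecoef_succ_mul m k hj hjm)

lemma abs_ecoef_succ_le {j : ℕ} (hj : 1 ≤ j) (h2j : 2 * j ≤ m) :
    |ecoef m (j + 1) k| ≤ |ecoef m j k| := by
  have hpos : (0 : ℤ) < ((m : ℤ) - j) ^ k (m - j) := pow_pos (by omega) _
  refine le_of_mul_le_mul_right ?_ hpos
  rw [abs_ecoef_succ_mul m k hj (by omega)]
  gcongr
  omega

lemma mul_abs_ecoef_succ_le {j : ℕ} (hj : 1 ≤ j) (h2j : 2 * j ≤ m) (hk : k (m - j) ≠ 0) :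
    ((m : ℤ) - j) * |ecoef m (j + 1) k| ≤ j * |ecoef m j k| := by
  obtain ⟨n, hn⟩ := Nat.exists_eq_succ_of_ne_zero hk
  have h := abs_ecoef_succ_mul m k hj (by omega)
  rw [hn, pow_succ, pow_succ] at h
  have hpos : (0 : ℤ) < ((m : ℤ) - j) ^ n := pow_pos (by omega) _
  refine le_of_mul_le_mul_right ?_ hpos
  calc ((m : ℤ) - j) * |ecoef m (j + 1) k| * ((m : ℤ) - j) ^ n
      = |ecoef m j k| * ((j : ℤ) ^ n * j) := by linear_combination h
    _ ≤ |ecoef m j k| * (((m : ℤ) - j) ^ n * j) := by gcongr; omega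
    _ = j * |ecoef m j k| * ((m : ℤ) - j) ^ n := by ring

lemma ecoef_eq_ecoef_one {j : ℕ} (hj : 1 ≤ j) (hjm : j ≤ m)
    (hk : ∀ i, 1 ≤ i → i < j → k (m - i) = 0) : ecoef m j k = ecoef m 1 k := by
  induction j, hj using Nat.le_induction with
  | base => rfl
  | succ j hj ih =>
    rw [ecoef_succ_of_eq_zero m k hj (by omega) (hk j hj (by omega)),
      ih (by omega) fun i hi hij => hk i hi (by omega)]

lemma mul_abs_ecoef_le_of_lt {t j : ℕ} (ht : 1 ≤ t) (hk : k (m - t) ≠ 0) (htj : t < j)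
    (hjm : 2 * j ≤ m + 2) : ((m : ℤ) - t) * |ecoef m j k| ≤ t * |ecoef m t k| := by
  induction j, htj using Nat.le_induction with
  | base => exact mul_abs_ecoef_succ_le m k ht (by omega) hk
  | succ j htj ih =>
    exact (mul_le_mul_of_nonneg_left (abs_ecoef_succ_le m k (by omega) (by omega))
      (by omega)).trans (ih (by omega))

lemma sum_ecoef_eq_mul {q : ℕ} (hqm : q ≤ m) (hk : ∀ i, 1 ≤ i → i < q → k (m - i) = 0) :
    ∑ j ∈ Icc 1 q, ecoef m j k = q * ecoef m 1 k := by
  rw [sum_congr rfl fun j hj => ?_, sum_const, Nat.card_Icc, nsmul_eq_mul, Nat.add_sub_cancel]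
  rw [mem_Icc] at hj
  exact ecoef_eq_ecoef_one m k hj.1 (by omega) fun i hi hij => hk i hi (by omega)

lemma le_mul_sum_ecoef {t q : ℕ} (ht : 1 ≤ t) (hkt : k (m - t) ≠ 0)
    (hk : ∀ i, 1 ≤ i → i < t → k (m - i) = 0) (htq : t ≤ q) (hqm : 2 * q ≤ m + 1) :
    t * ecoef m 1 k * (m - q) ≤ ((m : ℤ) - t) * ∑ j ∈ Icc 1 q, ecoef m j k := by
  induction q, htq using Nat.le_induction with
  | base =>
    rw [sum_ecoef_eq_mul m k (by omega) hk]
    linarith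
  | succ q htq ih =>
    have hlast := mul_abs_ecoef_le_of_lt m k ht hkt (j := q + 1) (by omega) (by omega)
    rw [ecoef_eq_ecoef_one m k ht (by omega) hk, abs_of_pos (ecoef_one_pos m k)] at hlast
    have hneg := neg_abs_le (((m : ℤ) - t) * ecoef m (q + 1) k)
    rw [abs_mul, abs_of_pos (by omega : (0 : ℤ) < m - t)] at hneg
    rw [sum_Icc_succ_top (by omega), mul_add]
    push_cast
    linarith [ih (by omega)]

lemma sum_ecoef_pos {q : ℕ} (hq : 1 ≤ q) (hqm : 2 * q ≤ m + 1) :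
    0 < ∑ j ∈ Icc 1 q, ecoef m j k := by
  have hc := ecoef_one_pos m k
  by_cases h : ∃ t, 1 ≤ t ∧ t < q ∧ k (m - t) ≠ 0
  · classical
    obtain ⟨ht, htq, hkt⟩ := Nat.find_spec h
    have hmin : ∀ i, 1 ≤ i → i < Nat.find h → k (m - i) = 0 := fun i hi hit => by
      by_contra hne
      exact Nat.find_min h hit ⟨hi, by omega, hne⟩
    have hlow := le_mul_sum_ecoef m k ht hkt hmin htq.le hqm
    have hmq : (0 : ℤ) < m - q := by omega
    exact pos_of_mul_pos_right ((by positivity : (0 : ℤ) < _).trans_le hlow) (by omega)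
  · push Not at h
    rw [sum_ecoef_eq_mul m k (by omega) h]
    positivity

lemma dcoef_eq_add :
    dcoef m k = ∑ j ∈ Icc 1 (m / 2), ecoef m j k + ∑ j ∈ Icc 1 ((m + 1) / 2), ecoef m j k := by
  unfold dcoef
  split_ifs
  · rw [show (m + 1) / 2 = m / 2 by omega]
    ring
  · rw [show (m + 1) / 2 = m / 2 + 1 by omega, sum_Icc_succ_top (by omega)]
    ring

lemma dcoef_dvd : (m : ℤ) ∣ dcoef m k := by
  rw [← ZMod.intCast_zmod_eq_zero_iff_dvd, dcoef_eq_add, Int.cast_add,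
    intCast_sum_ecoef m k (by omega), intCast_sum_ecoef m k (by omega), ← add_mul,
    ← Nat.cast_add, show m / 2 + (m + 1) / 2 = m by omega, ZMod.natCast_self, zero_mul]

lemma dcoef_pos (hm : 2 ≤ m) : 0 < dcoef m k := by
  rw [dcoef_eq_add]
  exact add_pos (sum_ecoef_pos m k (by omega) (by omega)) (sum_ecoef_pos m k (by omega) (by omega))

end

/-- For all `m ≥ 2` and all nonnegative integers `k_1, …, k_{m-1}`, the
coefficient `d^{(m)}_{k_1,…,k_{m-1}}` is a positive integer divisible by `m`. -/
theorem dcoef_pos_and_dvd (m : ℕ) (hm : 2 ≤ m) (k : ℕ → ℕ) :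
    0 < dcoef m k ∧ (m : ℤ) ∣ dcoef m k :=
  ⟨dcoef_pos m k hm, dcoef_dvd m k⟩
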